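/- For any two l-tracks f and g on the multilayered cycle MC_n^k (surjective walks where every step traverses an edge), min over i of d(f(i), g(i)) is at most ⌊n/2⌋ + 1. Hence the direct vertex span of MC_n^k is at most ⌊n/2⌋ + 1. -/

import Mathlib

/-- The multilayered cycle `MC n k` on vertex set `ZMod n × Fin k`. -/
def MC (n k : ℕ) : SimpleGraph (ZMod n × Fin k) where
  Adj u v := u ≠ v ∧ ((u.1 = v.1 ∧ (u.2.1 + 1 = v.2.1 ∨ v.2.1 + 1 = u.2.1)) ∨
      (u.2 = v.2 ∧ (u.1 + 1 = v.1 ∨ v.1 + 1 = u.1)))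
  symm := by
    constructor
    rintro u v ⟨h1, h2⟩
    refine ⟨h1.symm, ?_⟩
    rcases h2 with ⟨ha, hb⟩ | ⟨ha, hb⟩
    · exact Or.inl ⟨ha.symm, hb.symm⟩
    · exact Or.inr ⟨ha.symm, hb.symm⟩
  loopless := by constructor; rintro u ⟨h1, -⟩; exact h1 rfl

/-- A lazy `l`-track on `G`: surjective, consecutive values equal or adjacent. -/
def IsLazyTrack {V : Type*} (G : SimpleGraph V) {l : ℕ} (f : Fin l → V) : Prop :=
  Function.Surjective f ∧
    ∀ i : Fin l, ∀ h : i.1 + 1 < l, f ⟨i.1 + 1, h⟩ = f i ∨ G.Adj (f i) (f ⟨i.1 + 1, h⟩)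

/-- An `l`-track on `G`: surjective, consecutive values adjacent. -/
def IsTrack {V : Type*} (G : SimpleGraph V) {l : ℕ} (f : Fin l → V) : Prop :=
  Function.Surjective f ∧
    ∀ i : Fin l, ∀ h : i.1 + 1 < l, G.Adj (f i) (f ⟨i.1 + 1, h⟩)

/-- `f` and `g` are opposite lazy `l`-tracks: exactly one of them moves at each step. -/
def OppositeTracks {V : Type*} (G : SimpleGraph V) {l : ℕ} (f g : Fin l → V) : Prop :=
  ∀ i : Fin l, ∀ h : i.1 + 1 < l,
    (G.Adj (f i) (f ⟨i.1 + 1, h⟩) ↔ g ⟨i.1 + 1, h⟩ = g i)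



/-!
The layer difference `(f i).2 - (g i).2` of two tracks changes by at most `2` per step, is
`≥ 0` when `f` visits the top layer and `≤ 0` when `g` does. A discrete intermediate value
argument gives a time at which the two tracks are at most one layer apart; there, going half
way around the cycle and then one layer up or down joins `f i` to `g i`.
-/

lemma Fin.exists_abs_le_one_of_abs_sub_le_two {N : ℕ} (L : Fin N → ℤ)
    (hstep : ∀ i : Fin N, ∀ h : i.1 + 1 < N, |L ⟨i.1 + 1, h⟩ - L i| ≤ 2)
    {a b : Fin N} (ha : 0 ≤ L a) (hb : L b ≤ 0) : ∃ i, |L i| ≤ 1 := by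
  by_contra! hL
  have hN : 0 < N := a.pos
  have sign_const : ∀ m (hm : m < N), 0 < L ⟨m, hm⟩ ↔ 0 < L ⟨0, hN⟩ := by
    intro m hm
    induction m with
    | zero => rfl
    | succ m ih =>
      have h1 : |L ⟨m + 1, hm⟩ - L ⟨m, by omega⟩| ≤ 2 := hstep ⟨m, by omega⟩ hm
      have h2 := lt_abs.1 (hL ⟨m, by omega⟩)
      have h3 := lt_abs.1 (hL ⟨m + 1, hm⟩)
      rw [abs_le] at h1
      rw [← ih (by omega)]
      constructor <;> intro <;> omega
  have hapos : 0 < L a := by have := lt_abs.1 (hL a); omega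
  have hbpos : 0 < L b := (sign_const b b.2).2 ((sign_const a a.2).1 hapos)
  omega

namespace MC

variable {n k : ℕ}

lemma abs_layer_sub_le_one_of_adj {u v : ZMod n × Fin k} (h : (MC n k).Adj u v) :
    |(u.2.1 : ℤ) - v.2.1| ≤ 1 := by
  rcases h.2 with ⟨-, h2⟩ | ⟨h2, -⟩
  · rw [abs_le]; omega
  · simp [h2]

lemma adj_add_one (hn : 2 ≤ n) (a : ZMod n) (b : Fin k) : (MC n k).Adj (a, b) (a + 1, b) := by
  have : Fact (1 < n) := ⟨hn⟩
  refine ⟨fun h => ?_, Or.inr ⟨rfl, Or.inl rfl⟩⟩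
  simpa using congrArg Prod.fst h

lemma edist_add_natCast_le (hn : 2 ≤ n) (a : ZMod n) (b : Fin k) (m : ℕ) :
    (MC n k).edist (a, b) (a + m, b) ≤ m := by
  induction m with
  | zero => simp
  | succ m ih =>
    calc (MC n k).edist (a, b) (a + (m + 1 : ℕ), b)
        ≤ (MC n k).edist (a, b) (a + m, b) + (MC n k).edist (a + m, b) (a + m + 1, b) := by
          rw [Nat.cast_succ, ← add_assoc]; exact SimpleGraph.edist_triangle
      _ ≤ m + 1 := add_le_add ih (SimpleGraph.edist_eq_one_iff_adj.2 (adj_add_one hn _ b)).le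
      _ = (m + 1 : ℕ) := by push_cast; rfl

lemma edist_same_layer_le (hn : 2 ≤ n) (a c : ZMod n) (b : Fin k) :
    (MC n k).edist (a, b) (c, b) ≤ (n / 2 : ℕ) := by
  have : NeZero n := ⟨by omega⟩
  have hz : ((c - a).val : ZMod n) = c - a := ZMod.natCast_zmod_val _
  have hzn := ZMod.val_lt (c - a)
  by_cases hle : (c - a).val ≤ n / 2
  · have hc : c = a + (c - a).val := by rw [hz]; ring
    rw [hc]
    exact (edist_add_natCast_le hn a b _).trans (by exact_mod_cast hle)
  · have ha : a = c + (n - (c - a).val : ℕ) := by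
      rw [Nat.cast_sub hzn.le, hz, ZMod.natCast_self]; ring
    rw [SimpleGraph.edist_comm, ha]
    exact (edist_add_natCast_le hn c b _).trans (by exact_mod_cast (by omega))

lemma dist_le_of_abs_layer_sub_le_one (hn : 2 ≤ n) {u v : ZMod n × Fin k}
    (h : |(u.2.1 : ℤ) - v.2.1| ≤ 1) : (MC n k).dist u v ≤ n / 2 + 1 := by
  have hlayer : (MC n k).edist (v.1, u.2) v ≤ 1 := by
    rw [SimpleGraph.edist_le_one_iff_adj_or_eq]
    by_cases heq : u.2 = v.2
    · exact Or.inr (by rw [heq])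
    · have hne : u.2.1 ≠ v.2.1 := Fin.val_ne_of_ne heq
      refine Or.inl ⟨fun hc => heq (congrArg Prod.snd hc :), Or.inl ⟨rfl, ?_⟩⟩
      change u.2.1 + 1 = v.2.1 ∨ v.2.1 + 1 = u.2.1
      rw [abs_le] at h
      omega
  apply ENat.toNat_le_of_le_natCast
  calc (MC n k).edist u v ≤ (MC n k).edist u (v.1, u.2) + (MC n k).edist (v.1, u.2) v :=
        SimpleGraph.edist_triangle
    _ ≤ (n / 2 : ℕ) + 1 := add_le_add (edist_same_layer_le hn u.1 v.1 u.2) hlayer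
    _ = (n / 2 + 1 : ℕ) := by push_cast; rfl

end MC

theorem stmt11 (n k l : ℕ) (hn : 3 ≤ n) (hk : 2 ≤ k)
    (f g : Fin l → ZMod n × Fin k)
    (hf : IsTrack (MC n k) f) (hg : IsTrack (MC n k) g) :
    ∃ i : Fin l, (MC n k).dist (f i) (g i) ≤ n / 2 + 1 := by
  let top : ZMod n × Fin k := (0, ⟨k - 1, by omega⟩)
  obtain ⟨a, ha⟩ := hf.1 top
  obtain ⟨b, hb⟩ := hg.1 top
  let gap : Fin l → ℤ := fun i => (f i).2.1 - (g i).2.1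
  have hstep : ∀ i : Fin l, ∀ h : i.1 + 1 < l, |gap ⟨i.1 + 1, h⟩ - gap i| ≤ 2 := by
    intro i h
    have hfi := abs_le.1 (MC.abs_layer_sub_le_one_of_adj (hf.2 i h))
    have hgi := abs_le.1 (MC.abs_layer_sub_le_one_of_adj (hg.2 i h))
    simp only [gap]; rw [abs_le]; constructor <;> omega
  have hgap_a : 0 ≤ gap a := by
    have := (g a).2.2
    simp only [gap, ha, top]; omega
  have hgap_b : gap b ≤ 0 := by
    have := (f b).2.2
    simp only [gap, hb, top]; omega
  obtain ⟨i, hi⟩ := Fin.exists_abs_le_one_of_abs_sub_le_two gap hstep hgap_a hgap_b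
  exact ⟨i, MC.dist_le_of_abs_layer_sub_le_one (by omega) hi⟩
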